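/- For each integer $n \geq 0$, let $D_n = \mathbb{C}[x,y,z]/(x^{n+1} z - y^2 + 1)$. Then for all integers $n, m \geq 0$, the polynomial rings $D_n[T]$ and $D_m[T]$ are isomorphic as $\mathbb{C}$-algebras. -/

import Mathlib

open MvPolynomial

noncomputable section

/-- The ideal of relations of the Danielewski surface `Sₙ = {x^{n+1} z = y² - 1}`. -/
def relD (n : ℕ) : Ideal (MvPolynomial (Fin 3) ℂ) :=
  Ideal.span {X 0 ^ (n + 1) * X 2 - X 1 ^ 2 + 1}

/-- The coordinate ring `Dₙ = ℂ[x,y,z]/(x^{n+1} z - y² + 1)` of the Danielewski surface. -/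
def Danielewski (n : ℕ) : Type :=
  MvPolynomial (Fin 3) ℂ ⧸ relD n

instance (n : ℕ) : CommRing (Danielewski n) := by unfold Danielewski; infer_instance

instance (n : ℕ) : Algebra ℂ (Danielewski n) := by unfold Danielewski; infer_instance

/-! In the coordinate `w = (y + 1) / 2` (and after rescaling `z`), the surface `x^{n+1} z = y² - 1`
becomes `x^{n+1} z = w² - w`, an equation that makes sense over any commutative ring `R`.
An algebra map out of the cylinder `(R[x, w, z] / (x^{n+1} z - w² + w))[t]` is the same as a point
`(x, w, z, t)` with `x^{n+1} z = w² - w`, so by Yoneda it suffices to give mutually inverse maps,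
natural in the ring of coordinates, between the points of the `n`-th and the `(n+1)`-st cylinder.
Such maps are given by polynomial formulas with integer coefficients. -/

namespace MvPolynomial

variable {σ R A : Type*} [CommRing R] [CommRing A] [Algebra R A]

theorem aeval_eq_zero_of_mem_span_singleton {p q : MvPolynomial σ R} {v : σ → A}
    (hp : aeval v p = 0) (hq : q ∈ Ideal.span {p}) : aeval v q = 0 := by
  obtain ⟨c, rfl⟩ := Ideal.mem_span_singleton'.1 hq
  rw [map_mul, hp, mul_zero]

theorem quotient_algHom_ext {I : Ideal (MvPolynomial σ R)}
    {f g : MvPolynomial σ R ⧸ I →ₐ[R] A}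
    (h : ∀ i, f (Ideal.Quotient.mk I (X i)) = g (Ideal.Quotient.mk I (X i))) : f = g :=
  Ideal.Quotient.algHom_ext R (MvPolynomial.algHom_ext h)

end MvPolynomial

theorem two_mul_algebraMap_inv_two (K A : Type*) [Field K] [NeZero (2 : K)] [Semiring A]
    [Algebra K A] : 2 * algebraMap K A 2⁻¹ = 1 := by
  rw [← map_ofNat (algebraMap K A) 2, ← map_mul, mul_inv_cancel₀ two_ne_zero, map_one]

abbrev DanielewskiModel (R : Type*) [CommRing R] (n : ℕ) : Type _ :=
  MvPolynomial (Fin 3) R ⧸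
    Ideal.span {(X 0 ^ (n + 1) * X 2 - X 1 ^ 2 + X 1 : MvPolynomial (Fin 3) R)}

namespace DanielewskiModel

variable {R A : Type*} [CommRing R] [CommRing A] [Algebra R A] {n : ℕ}

def x : DanielewskiModel R n := Ideal.Quotient.mk _ (X 0)

def w : DanielewskiModel R n := Ideal.Quotient.mk _ (X 1)

def z : DanielewskiModel R n := Ideal.Quotient.mk _ (X 2)

theorem x_pow_succ_mul_z : (x : DanielewskiModel R n) ^ (n + 1) * z = w ^ 2 - w := by
  have h := Ideal.Quotient.eq_zero_iff_mem.2
    (Ideal.mem_span_singleton_self (X 0 ^ (n + 1) * X 2 - X 1 ^ 2 + X 1 : MvPolynomial (Fin 3) R))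
  simp only [map_add, map_sub, map_mul, map_pow] at h
  simp only [x, w, z]
  linear_combination h

def lift (a b c : A) (h : a ^ (n + 1) * c = b ^ 2 - b) : DanielewskiModel R n →ₐ[R] A :=
  Ideal.Quotient.liftₐ _ (aeval ![a, b, c])
    fun _ => aeval_eq_zero_of_mem_span_singleton (by simp [h])

section

variable (a b c : A) (h : a ^ (n + 1) * c = b ^ 2 - b)

@[simp] theorem lift_x : lift a b c h (x : DanielewskiModel R n) = a := aeval_X _ 0

@[simp] theorem lift_w : lift a b c h (w : DanielewskiModel R n) = b := aeval_X _ 1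

@[simp] theorem lift_z : lift a b c h (z : DanielewskiModel R n) = c := aeval_X _ 2

end

theorem algHom_ext {f g : DanielewskiModel R n →ₐ[R] A} (hx : f x = g x) (hw : f w = g w)
    (hz : f z = g z) : f = g :=
  quotient_algHom_ext fun i => by fin_cases i <;> assumption

end DanielewskiModel

@[ext]
structure CylinderPoint (n : ℕ) (A : Type*) [CommRing A] where
  x : A
  w : A
  z : A
  t : A
  x_pow_succ_mul_z : x ^ (n + 1) * z = w ^ 2 - w

namespace CylinderPoint

variable {n : ℕ} {A B F : Type*} [CommRing A] [CommRing B] [FunLike F A B] [RingHomClass F A B]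

def map (f : F) (p : CylinderPoint n A) : CylinderPoint n B where
  x := f p.x
  w := f p.w
  z := f p.z
  t := f p.t
  x_pow_succ_mul_z := by rw [← map_pow, ← map_mul, p.x_pow_succ_mul_z, map_sub, map_pow]

-- `(x, w, x z)` is a point of the `n`-th surface; move it by the `𝔾ₐ`-action
-- `w ↦ w - x^{n+1} t` of that surface. The new `t` is `(t + (2w' - 1) z') / x`, the division
-- being exact thanks to the equation, so that `ascend` recovers `t`.
def descend (p : CylinderPoint (n + 1) A) : CylinderPoint n A where
  x := p.x
  w := p.w - p.x ^ (n + 1) * p.t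
  z := p.x * p.z - (2 * p.w - 1) * p.t + p.x ^ (n + 1) * p.t ^ 2
  t := (2 * p.w - 1) * p.z - 6 * p.x ^ (n + 1) * p.z * p.t
    + 3 * p.x ^ n * (2 * p.w - 1) * p.t ^ 2 - 2 * p.x ^ (2 * n + 1) * p.t ^ 3
  x_pow_succ_mul_z := by linear_combination p.x_pow_succ_mul_z

-- Modulo `x` we have `(2w - 1)² = 1`, so `s ≡ -(2w - 1) z` is exactly what makes
-- `(w + x^{n+1} s)² - (w + x^{n+1} s)` divisible by `x^{n+2}`.
def ascend (p : CylinderPoint n A) : CylinderPoint (n + 1) A :=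
  let s := p.x * p.t - (2 * p.w - 1) * p.z
  { x := p.x
    w := p.w + p.x ^ (n + 1) * s
    z := (2 * p.w - 1) * p.t - 4 * p.x ^ n * p.z ^ 2 + p.x ^ n * s ^ 2
    t := s
    x_pow_succ_mul_z := by linear_combination (1 - 4 * p.x ^ (n + 1) * p.z) * p.x_pow_succ_mul_z }

theorem descend_ascend (p : CylinderPoint n A) : p.ascend.descend = p := by
  obtain ⟨x, w, z, t, h⟩ := p
  ext <;> simp only [ascend, descend]
  · ring
  · linear_combination (-4 * z) * h
  · linear_combination (16 * x ^ n * z * (x * t - (2 * w - 1) * z) - 4 * t) * h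

theorem ascend_descend (p : CylinderPoint (n + 1) A) : p.descend.ascend = p := by
  obtain ⟨x, w, z, t, h⟩ := p
  ext <;> simp only [ascend, descend]
  · linear_combination (-4 * x ^ (n + 1) * t) * h
  · linear_combination
      (-4 * z - 4 * x ^ n * t ^ 2 + 16 * x ^ n * t ^ 2 * (x ^ (n + 2) * z - w ^ 2 + w)) * h
  · linear_combination (-4 * t) * h

theorem map_descend (f : F) (p : CylinderPoint (n + 1) A) :
    p.descend.map f = (p.map f).descend := by
  ext <;> simp [map, descend, map_ofNat]

theorem map_ascend (f : F) (p : CylinderPoint n A) : p.ascend.map f = (p.map f).ascend := by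
  ext <;> simp [map, ascend, map_ofNat]

end CylinderPoint

abbrev DanielewskiCylinder (R : Type*) [CommRing R] (n : ℕ) : Type _ :=
  Polynomial (DanielewskiModel R n)

namespace DanielewskiCylinder

open DanielewskiModel (x w z)

variable {R A B : Type*} [CommRing R] [CommRing A] [Algebra R A] [CommRing B] [Algebra R B]
  {n : ℕ}

variable (R) in
def lift (p : CylinderPoint n A) : DanielewskiCylinder R n →ₐ[R] A :=
  Polynomial.aevalTower (DanielewskiModel.lift p.x p.w p.z p.x_pow_succ_mul_z) p.t

section

variable (p : CylinderPoint n A)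

@[simp] theorem lift_C_x : lift R p (Polynomial.C x) = p.x := by simp [lift]

@[simp] theorem lift_C_w : lift R p (Polynomial.C w) = p.w := by simp [lift]

@[simp] theorem lift_C_z : lift R p (Polynomial.C z) = p.z := by simp [lift]

@[simp] theorem lift_X : lift R p Polynomial.X = p.t := by simp [lift]

end

variable (R n) in
def genericPoint : CylinderPoint n (DanielewskiCylinder R n) where
  x := Polynomial.C x
  w := Polynomial.C w
  z := Polynomial.C z
  t := Polynomial.X
  x_pow_succ_mul_z := by
    rw [← map_pow, ← map_mul, DanielewskiModel.x_pow_succ_mul_z, map_sub, map_pow]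

theorem genericPoint_map_lift (p : CylinderPoint n A) : (genericPoint R n).map (lift R p) = p := by
  ext <;> simp [genericPoint, CylinderPoint.map]

theorem hom_ext {f g : DanielewskiCylinder R n →ₐ[R] A}
    (h : (genericPoint R n).map f = (genericPoint R n).map g) : f = g := by
  simp only [genericPoint, CylinderPoint.map, CylinderPoint.mk.injEq] at h
  obtain ⟨hx, hw, hz, ht⟩ := h
  exact Polynomial.algHom_ext' (DanielewskiModel.algHom_ext hx hw hz) ht

theorem comp_lift (f : A →ₐ[R] B) (p : CylinderPoint n A) :
    f.comp (lift R p) = lift R (p.map f) :=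
  hom_ext (by ext <;> simp [genericPoint, CylinderPoint.map])

theorem lift_genericPoint : lift R (genericPoint R n) = AlgHom.id R (DanielewskiCylinder R n) :=
  hom_ext (A := DanielewskiCylinder R n) (by ext <;> simp [genericPoint, CylinderPoint.map])

variable (R n) in
def succEquiv : DanielewskiCylinder R n ≃ₐ[R] DanielewskiCylinder R (n + 1) :=
  AlgEquiv.ofAlgHom (lift R (genericPoint R (n + 1)).descend) (lift R (genericPoint R n).ascend)
    (by rw [comp_lift (A := DanielewskiCylinder R n) (B := DanielewskiCylinder R (n + 1)),
      CylinderPoint.map_ascend, genericPoint_map_lift, CylinderPoint.ascend_descend,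
      lift_genericPoint])
    (by rw [comp_lift (A := DanielewskiCylinder R (n + 1)) (B := DanielewskiCylinder R n),
      CylinderPoint.map_descend, genericPoint_map_lift, CylinderPoint.descend_ascend,
      lift_genericPoint])

variable (R) in
def zeroEquiv : (n : ℕ) → DanielewskiCylinder R 0 ≃ₐ[R] DanielewskiCylinder R n
  | 0 => AlgEquiv.refl
  | n + 1 => (zeroEquiv n).trans (succEquiv R n)

end DanielewskiCylinder

-- Stated for the quotient ring itself: the instances on `Danielewski n` are not reducible,
-- which would block `simp` and `ring`.
namespace Danielewski

variable {A : Type*} [CommRing A] [Algebra ℂ A] {n : ℕ}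

def x : MvPolynomial (Fin 3) ℂ ⧸ relD n := Ideal.Quotient.mk (relD n) (X 0)

def y : MvPolynomial (Fin 3) ℂ ⧸ relD n := Ideal.Quotient.mk (relD n) (X 1)

def z : MvPolynomial (Fin 3) ℂ ⧸ relD n := Ideal.Quotient.mk (relD n) (X 2)

theorem x_pow_succ_mul_z : (x : MvPolynomial (Fin 3) ℂ ⧸ relD n) ^ (n + 1) * z = y ^ 2 - 1 := by
  have h : Ideal.Quotient.mk (relD n) (X 0 ^ (n + 1) * X 2 - X 1 ^ 2 + 1) = 0 :=
    Ideal.Quotient.eq_zero_iff_mem.2 (Ideal.mem_span_singleton_self _)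
  simp only [map_add, map_sub, map_mul, map_pow, map_one] at h
  simp only [x, y, z]
  linear_combination h

def lift (a b c : A) (h : a ^ (n + 1) * c = b ^ 2 - 1) :
    MvPolynomial (Fin 3) ℂ ⧸ relD n →ₐ[ℂ] A :=
  Ideal.Quotient.liftₐ _ (aeval ![a, b, c])
    fun _ => aeval_eq_zero_of_mem_span_singleton (by simp [h])

section

variable (a b c : A) (h : a ^ (n + 1) * c = b ^ 2 - 1)

@[simp] theorem lift_x : lift a b c h (x : MvPolynomial (Fin 3) ℂ ⧸ relD n) = a := aeval_X _ 0

@[simp] theorem lift_y : lift a b c h (y : MvPolynomial (Fin 3) ℂ ⧸ relD n) = b := aeval_X _ 1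

@[simp] theorem lift_z : lift a b c h (z : MvPolynomial (Fin 3) ℂ ⧸ relD n) = c := aeval_X _ 2

end

theorem algHom_ext {f g : MvPolynomial (Fin 3) ℂ ⧸ relD n →ₐ[ℂ] A} (hx : f x = g x)
    (hy : f y = g y) (hz : f z = g z) : f = g :=
  quotient_algHom_ext fun i => by fin_cases i <;> assumption

variable (n)

def toModel : MvPolynomial (Fin 3) ℂ ⧸ relD n →ₐ[ℂ] DanielewskiModel ℂ n :=
  lift DanielewskiModel.x (2 * DanielewskiModel.w - 1) (4 * DanielewskiModel.z)
    (by linear_combination 4 * DanielewskiModel.x_pow_succ_mul_z (R := ℂ) (n := n))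

def ofModel : DanielewskiModel ℂ n →ₐ[ℂ] MvPolynomial (Fin 3) ℂ ⧸ relD n :=
  DanielewskiModel.lift x (algebraMap ℂ _ 2⁻¹ * (y + 1)) (algebraMap ℂ _ 2⁻¹ ^ 2 * z) (by
    have h2 := two_mul_algebraMap_inv_two ℂ (MvPolynomial (Fin 3) ℂ ⧸ relD n)
    linear_combination algebraMap ℂ _ 2⁻¹ ^ 2 * x_pow_succ_mul_z (n := n)
      - (y + 1) * algebraMap ℂ _ 2⁻¹ * h2)

theorem toModel_comp_ofModel : (toModel n).comp (ofModel n) = AlgHom.id ℂ _ := by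
  have h2 := two_mul_algebraMap_inv_two ℂ (DanielewskiModel ℂ n)
  apply DanielewskiModel.algHom_ext <;> simp [toModel, ofModel]
  · linear_combination DanielewskiModel.w * h2
  · linear_combination (2 * algebraMap ℂ _ 2⁻¹ + 1) * DanielewskiModel.z * h2

theorem ofModel_comp_toModel : (ofModel n).comp (toModel n) = AlgHom.id ℂ _ := by
  have h2 := two_mul_algebraMap_inv_two ℂ (MvPolynomial (Fin 3) ℂ ⧸ relD n)
  apply algHom_ext <;> simp [toModel, ofModel, map_ofNat]
  · linear_combination (y + 1) * h2
  · linear_combination (2 * algebraMap ℂ _ 2⁻¹ + 1) * z * h2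

def equivModel : Danielewski n ≃ₐ[ℂ] DanielewskiModel ℂ n :=
  AlgEquiv.ofAlgHom (toModel n) (ofModel n) (toModel_comp_ofModel n) (ofModel_comp_toModel n)

end Danielewski

theorem statement15 (n m : ℕ) :
    Nonempty (Polynomial (Danielewski n) ≃ₐ[ℂ] Polynomial (Danielewski m)) :=
  ⟨(Polynomial.mapAlgEquiv (Danielewski.equivModel n)).trans <|
    ((DanielewskiCylinder.zeroEquiv ℂ n).symm.trans (DanielewskiCylinder.zeroEquiv ℂ m)).trans
      (Polynomial.mapAlgEquiv (Danielewski.equivModel m)).symm⟩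

end
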